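/- arXiv:2508.09773 — 6 statements merged into one kernel-verified Lean document; each statement's English description precedes it below -/
import Mathlib

section
/- Let R be a commutative ring and let a, b, c, d, e, f, g, h, i ∈ R satisfy a·e − b·d = 1, b·f − c·e = 1, d·h − e·g = 1 and e·i − f·h = 1. Then det [[a,b,c],[d,e,f],[g,h,i]] = (a + c + g + i) + (c·g − a·i)·e. In particular, if e = 0 then the determinant equals a + c + g + i, the sum of the four corner entries. -/
theorem Matrix.det_fin_three_eq_contiguous_minors {R : Type*} [CommRing R]
    (a b c d e f g h i : R) :
    Matrix.det !![a, b, c; d, e, f; g, h, i] =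
      i * (a * e - b * d) + g * (b * f - c * e) + c * (d * h - e * g) + a * (e * i - f * h) +
        (c * g - a * i) * e := by
  rw [Matrix.det_fin_three]
  simp only [Matrix.of_apply, Matrix.cons_val', Matrix.cons_val_zero, Matrix.cons_val_one,
    Matrix.cons_val_two, Matrix.empty_val', Matrix.cons_val_fin_one, Matrix.head_cons,
    Matrix.tail_cons, Matrix.head_fin_const]
  ring

theorem sl2_det3_formula {R : Type*} [CommRing R] (a b c d e f g h i : R)
    (h1 : a * e - b * d = 1) (h2 : b * f - c * e = 1)
    (h3 : d * h - e * g = 1) (h4 : e * i - f * h = 1) :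
    Matrix.det !![a, b, c; d, e, f; g, h, i] = (a + c + g + i) + (c * g - a * i) * e ∧
      (e = 0 → Matrix.det !![a, b, c; d, e, f; g, h, i] = a + c + g + i) := by
  have hdet : Matrix.det !![a, b, c; d, e, f; g, h, i] =
      (a + c + g + i) + (c * g - a * i) * e := by
    rw [Matrix.det_fin_three_eq_contiguous_minors, h1, h2, h3, h4]
    ring
  exact ⟨hdet, fun he => by rw [hdet, he, mul_zero, add_zero]⟩
end

section
/- Let R be an integral domain and let m : ℤ × ℤ → R be an SL2-tiling over R. If the entry m(i,j) is wild, then m(i,j) = 0. -/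
/-!
By Dodgson condensation, the determinant of a 3×3 matrix times its centre entry equals the
determinant of the 2×2 matrix of its four connected 2×2 minors. In an SL2-tiling all four minors
are 1, so the 3×3 determinant annihilates the centre entry.
-/

/-- An SL2-tiling over a commutative ring `R`. -/
def IsSL2Tiling {R : Type*} [CommRing R] (m : ℤ × ℤ → R) : Prop :=
  ∀ i j : ℤ, m (i, j) * m (i + 1, j + 1) - m (i, j + 1) * m (i + 1, j) = 1

/-- The determinant of the 3×3 block of `m` centred at `(i, j)`. -/
def nbhdDet {R : Type*} [CommRing R] (m : ℤ × ℤ → R) (i j : ℤ) : R :=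
  (Matrix.of fun u v : Fin 3 => m (i + ((u : ℕ) : ℤ) - 1, j + ((v : ℕ) : ℤ) - 1)).det

/-- The entry `m (i, j)` is wild if the surrounding 3×3 determinant is nonzero. -/
def IsWild {R : Type*} [CommRing R] (m : ℤ × ℤ → R) (i j : ℤ) : Prop :=
  nbhdDet m i j ≠ 0

theorem Matrix.det_fin_three_mul_center {R : Type*} [CommRing R] (M : Matrix (Fin 3) (Fin 3) R) :
    M.det * M 1 1 =
      (M 0 0 * M 1 1 - M 0 1 * M 1 0) * (M 1 1 * M 2 2 - M 1 2 * M 2 1) -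
        (M 0 1 * M 1 2 - M 0 2 * M 1 1) * (M 1 0 * M 2 1 - M 1 1 * M 2 0) := by
  rw [Matrix.det_fin_three]
  ring

namespace IsSL2Tiling

variable {R : Type*} [CommRing R] {m : ℤ × ℤ → R}

theorem nbhdDet_mul_self_eq_zero (hm : IsSL2Tiling m) (i j : ℤ) :
    nbhdDet m i j * m (i, j) = 0 := by
  set M : Matrix (Fin 3) (Fin 3) R :=
    Matrix.of fun u v => m (i + ((u : ℕ) : ℤ) - 1, j + ((v : ℕ) : ℤ) - 1)
  have hcenter : m (i, j) = M 1 1 := by simp [M]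
  rw [nbhdDet, hcenter, M.det_fin_three_mul_center]
  have h00 := hm (i - 1) (j - 1)
  have h01 := hm (i - 1) j
  have h10 := hm i (j - 1)
  simp only [sub_add_cancel] at h00 h01 h10
  have htwo (k : ℤ) : k + 2 - 1 = k + 1 := by ring
  simp only [M, Matrix.of_apply, Fin.val_zero, Fin.val_one, Fin.val_two, Nat.cast_zero,
    Nat.cast_one, Nat.cast_ofNat, add_zero, add_sub_cancel_right, htwo]
  rw [h00, h01, h10, hm i j]
  ring

end IsSL2Tiling

theorem wild_entry_eq_zero {R : Type*} [CommRing R] [IsDomain R]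
    (m : ℤ × ℤ → R) (hm : IsSL2Tiling m) (i j : ℤ) (hw : IsWild m i j) :
    m (i, j) = 0 :=
  (mul_eq_zero.mp (hm.nbhdDet_mul_self_eq_zero i j)).resolve_left hw
end

section
/- Let m : ℤ × ℤ → ℤ be an SL2-tiling over the integers and suppose m(i,j) = 0 for some i, j ∈ ℤ. Then either (m(i−1,j), m(i,j−1), m(i,j+1), m(i+1,j)) = (1, −1, 1, −1) or (m(i−1,j), m(i,j−1), m(i,j+1), m(i+1,j)) = (−1, 1, −1, 1); that is, every zero entry is surrounded above/left/right/below by 1, −1, 1, −1 or by −1, 1, −1, 1. -/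
namespace IsSL2Tiling

variable {R : Type*} [CommRing R] {m : ℤ × ℤ → R}

theorem above_mul_right_eq_one (hm : IsSL2Tiling m) {i j : ℤ} (h0 : m (i, j) = 0) :
    m (i - 1, j) * m (i, j + 1) = 1 := by
  simpa [h0] using hm (i - 1) j

theorem left_eq_neg_right (hm : IsSL2Tiling m) {i j : ℤ} (h0 : m (i, j) = 0) :
    m (i, j - 1) = -m (i, j + 1) := by
  have h := hm (i - 1) (j - 1)
  simp only [sub_add_cancel, h0, mul_zero, zero_sub] at h
  linear_combination (-m (i, j + 1)) * h - m (i, j - 1) * hm.above_mul_right_eq_one h0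

theorem below_eq_neg_above (hm : IsSL2Tiling m) {i j : ℤ} (h0 : m (i, j) = 0) :
    m (i + 1, j) = -m (i - 1, j) := by
  have h := hm i j
  simp only [h0, zero_mul, zero_sub] at h
  linear_combination (-m (i - 1, j)) * h - m (i + 1, j) * hm.above_mul_right_eq_one h0

end IsSL2Tiling

theorem zero_entry_neighbours (m : ℤ × ℤ → ℤ) (hm : IsSL2Tiling m)
    (i j : ℤ) (h0 : m (i, j) = 0) :
    (m (i - 1, j) = 1 ∧ m (i, j - 1) = -1 ∧ m (i, j + 1) = 1 ∧ m (i + 1, j) = -1) ∨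
      (m (i - 1, j) = -1 ∧ m (i, j - 1) = 1 ∧ m (i, j + 1) = -1 ∧ m (i + 1, j) = 1) := by
  rw [hm.left_eq_neg_right h0, hm.below_eq_neg_above h0]
  rcases Int.eq_one_or_neg_one_of_mul_eq_one' (hm.above_mul_right_eq_one h0) with
    ⟨habove, hright⟩ | ⟨habove, hright⟩
  · left; simp [habove, hright]
  · right; simp [habove, hright]
end

section
/- Let R be an integral domain and let m : ℤ × ℤ → R be an SL2-tiling over R. If the entry m(i,j) is wild, then m(i,j) = 0, the determinant of the 3×3 matrix (m(i+r, j+s))_{r,s ∈ {−1,0,1}} equals m(i−1,j−1) + m(i−1,j+1) + m(i+1,j−1) + m(i+1,j+1), and at least one of the four diagonally adjacent entries m(i−1,j−1), m(i−1,j+1), m(i+1,j−1), m(i+1,j+1) is nonzero. -/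
section

variable {R : Type*} [CommRing R] (m : ℤ × ℤ → R) (i j : ℤ)

theorem nbhdDet_eq :
    nbhdDet m i j =
      m (i - 1, j - 1) * m (i, j) * m (i + 1, j + 1)
        - m (i - 1, j - 1) * m (i, j + 1) * m (i + 1, j)
        - m (i - 1, j) * m (i, j - 1) * m (i + 1, j + 1)
        + m (i - 1, j) * m (i, j + 1) * m (i + 1, j - 1)
        + m (i - 1, j + 1) * m (i, j - 1) * m (i + 1, j)
        - m (i - 1, j + 1) * m (i, j) * m (i + 1, j - 1) := by
  rw [nbhdDet, Matrix.det_fin_three]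
  simp only [Matrix.of_apply, Fin.val_zero, Fin.val_one, Fin.val_two, Nat.cast_zero,
    Nat.cast_one, Nat.cast_ofNat, add_zero, add_sub_cancel_right]
  ring_nf

variable {m}

theorem IsSL2Tiling.minors_around (hm : IsSL2Tiling m) :
    m (i - 1, j - 1) * m (i, j) - m (i - 1, j) * m (i, j - 1) = 1 ∧
      m (i - 1, j) * m (i, j + 1) - m (i - 1, j + 1) * m (i, j) = 1 ∧
      m (i, j - 1) * m (i + 1, j) - m (i, j) * m (i + 1, j - 1) = 1 ∧
      m (i, j) * m (i + 1, j + 1) - m (i, j + 1) * m (i + 1, j) = 1 := by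
  refine ⟨?_, ?_, ?_, hm i j⟩
  · simpa only [sub_add_cancel] using hm (i - 1) (j - 1)
  · simpa only [sub_add_cancel] using hm (i - 1) j
  · simpa only [sub_add_cancel] using hm i (j - 1)

theorem IsSL2Tiling.mul_nbhdDet_eq_zero (hm : IsSL2Tiling m) :
    m (i, j) * nbhdDet m i j = 0 := by
  obtain ⟨h₁, h₂, h₃, h₄⟩ := hm.minors_around i j
  rw [nbhdDet_eq]
  linear_combination
    (m (i - 1, j - 1) * m (i, j) - m (i - 1, j) * m (i, j - 1)) * h₄
      + (m (i - 1, j + 1) * m (i, j) - m (i - 1, j) * m (i, j + 1)) * h₃ + h₁ - h₂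

theorem IsSL2Tiling.nbhdDet_eq_corners_add (hm : IsSL2Tiling m) :
    nbhdDet m i j =
      m (i - 1, j - 1) + m (i - 1, j + 1) + m (i + 1, j - 1) + m (i + 1, j + 1)
        + (m (i - 1, j + 1) * m (i + 1, j - 1) - m (i - 1, j - 1) * m (i + 1, j + 1))
          * m (i, j) := by
  obtain ⟨h₁, h₂, h₃, h₄⟩ := hm.minors_around i j
  rw [nbhdDet_eq]
  linear_combination m (i - 1, j - 1) * h₄ + m (i + 1, j + 1) * h₁
    + m (i + 1, j - 1) * h₂ + m (i - 1, j + 1) * h₃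

end

theorem wild_entry_properties {R : Type*} [CommRing R] [IsDomain R]
    (m : ℤ × ℤ → R) (hm : IsSL2Tiling m) (i j : ℤ) (hw : IsWild m i j) :
    m (i, j) = 0 ∧
      nbhdDet m i j =
        m (i - 1, j - 1) + m (i - 1, j + 1) + m (i + 1, j - 1) + m (i + 1, j + 1) ∧
      (m (i - 1, j - 1) ≠ 0 ∨ m (i - 1, j + 1) ≠ 0 ∨
        m (i + 1, j - 1) ≠ 0 ∨ m (i + 1, j + 1) ≠ 0) := by
  have hcenter : m (i, j) = 0 :=
    (mul_eq_zero.mp (hm.mul_nbhdDet_eq_zero i j)).resolve_right hw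
  have hdet : nbhdDet m i j =
      m (i - 1, j - 1) + m (i - 1, j + 1) + m (i + 1, j - 1) + m (i + 1, j + 1) := by
    rw [hm.nbhdDet_eq_corners_add, hcenter, mul_zero, add_zero]
  refine ⟨hcenter, hdet, ?_⟩
  by_contra! hcorners
  obtain ⟨ha, hc, hg, hk⟩ := hcorners
  exact hw (by rw [hdet, ha, hc, hg, hk]; ring)
end

section
/- Let K be the field of fractions of the multivariate polynomial ring ℚ[x_{(i,j)} : (i,j) ∈ ℤ × ℤ]. Define M : ℤ × ℤ → K by: M(i,j) = x_{(i,j)} if 3i + j ≡ 9 (mod 10); otherwise M(i,j) = 0 if i + j is odd; otherwise M(i,j) = −1 if j − i ≡ 0 (mod 4) and M(i,j) = 1 if j − i ≡ 2 (mod 4). Then every contiguous block of M has rank deficiency at most 2: for all i₀, j₀ ∈ ℤ and all positive integers p, q, the p × q matrix over K with (r,s)-entry M(i₀ + r, j₀ + s) for 0 ≤ r < p, 0 ≤ s < q has rank at least min(p, q) − 2. -/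
/-- The field of fractions of the polynomial ring over `ℚ` in the variables `x_(i,j)`,
`(i,j) ∈ ℤ × ℤ`. -/
abbrev K : Type := FractionRing (MvPolynomial (ℤ × ℤ) ℚ)

/-- The anti-periodic tiling by the 2×2 identity matrix, modified by placing the formal
variable `x_(i,j)` at each point of the sublattice `{(i, j) : 3i + j ≡ 9 (mod 10)}`. -/
noncomputable def MexK : ℤ × ℤ → K := fun p =>
  if (3 * p.1 + p.2) % 10 = 9 then
    algebraMap (MvPolynomial (ℤ × ℤ) ℚ) K (MvPolynomial.X p)
  else if (p.1 + p.2) % 2 = 1 then 0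
  else if (p.2 - p.1) % 4 = 0 then -1 else 1

/-!
Write the block over the polynomial ring: lattice cells carry distinct variables, all other cells
the constants of the identity tiling. Take a partial permutation `T` of cells that are either
lattice cells or nonzero constants, such that any two of its constant cells span zero entries in
the other two corners. In the corresponding minor the monomial formed by the lattice cells of `T`
comes from the identity permutation alone, so the minor is nonzero and the rank is at least `#T`.
Such a `T` with `#T ≥ n - 2` exists in every `n × n` block: since `3` is a unit mod `10`, every ten
consecutive rows are matched by lattice cells to ten consecutive columns, which leaves a corner
of size below `10`, checked by computation. Two constant cells of `T` must differ in the parity of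
both row and column, so there are at most two of them; this is where the `2` comes from.
-/

open MvPolynomial Finset Equiv

section TransversalDet

variable {ι σ R : Type*} [Fintype ι] [DecidableEq ι] [CommRing R]
  (V : ι → ι → Prop) [DecidableRel V] (x : ι → ι → σ)

noncomputable def permExponent (τ : Perm ι) : σ →₀ ℕ :=
  ∑ a, if V (τ a) a then Finsupp.single (x (τ a) a) 1 else 0

variable {V x}

lemma permExponent_apply (hx : Function.Injective (Function.uncurry x)) (τ : Perm ι) (u w : ι) :
    permExponent V x τ (x u w) = if V u w ∧ τ w = u then 1 else 0 := by
  classical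
  have hx' : ∀ a b, x a b = x u w ↔ a = u ∧ b = w := fun a b =>
    (hx.eq_iff (a := (a, b)) (b := (u, w))).trans Prod.ext_iff
  have hcell : ∀ a, (if V (τ a) a then Finsupp.single (x (τ a) a) 1 else 0 : σ →₀ ℕ) (x u w) =
      if w = a then (if V u w ∧ τ w = u then 1 else 0) else 0 := by
    intro a
    simp only [apply_ite (fun f : σ →₀ ℕ => f (x u w)), Finsupp.single_apply, hx']
    by_cases haw : w = a
    · subst haw; by_cases hu : τ w = u <;> simp [hu]
    · simp [haw, Ne.symm haw]
  simp only [permExponent, Finsupp.finsetSum_apply, hcell, sum_ite_eq, mem_univ, if_true]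

lemma not_V_of_permExponent_eq (hx : Function.Injective (Function.uncurry x)) {τ : Perm ι}
    (hτ : permExponent V x τ = permExponent V x 1) {b : ι} (hb : τ b ≠ b) :
    ¬ V (τ b) b ∧ ¬ V b b ∧ ¬ V (τ b) (τ b) := by
  have key : ∀ u w, (V u w ∧ τ w = u) ↔ (V u w ∧ w = u) := by
    intro u w
    have := congrArg (· (x u w)) hτ
    simp only [permExponent_apply hx, Perm.one_apply] at this
    split_ifs at this <;> simp_all
  refine ⟨fun h => hb ((key _ _).1 ⟨h, rfl⟩).2.symm, fun h => hb ?_, fun h => ?_⟩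
  · exact ((key b b).2 ⟨h, rfl⟩).2
  · exact hb (τ.injective ((key (τ b) (τ b)).2 ⟨h, rfl⟩).2)

theorem det_ite_X_C_ne_zero [IsDomain R] (hx : Function.Injective (Function.uncurry x))
    (k : ι → ι → R) (hdiag : ∀ a, ¬ V a a → k a a ≠ 0)
    (hoff : ∀ a b, a ≠ b → ¬ V a a → ¬ V b b → ¬ V a b → k a b = 0) :
    (Matrix.of fun a b => if V a b then X (x a b) else C (k a b) :
      Matrix ι ι (MvPolynomial σ R)).det ≠ 0 := by
  set w : ι → ι → R := fun a b => if V a b then 1 else k a b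
  have hterm : ∀ τ : Perm ι, ∏ a, (if V (τ a) a then X (x (τ a) a) else C (k (τ a) a)) =
      (monomial (permExponent V x τ) (∏ a, w (τ a) a) : MvPolynomial σ R) := by
    intro τ
    rw [permExponent, monomial_sum_prod]
    refine prod_congr rfl fun a _ => ?_
    simp only [w]
    split_ifs <;> simp [X]
  have hcoeff : coeff (permExponent V x 1) (Matrix.of fun a b =>
      if V a b then X (x a b) else C (k a b) : Matrix ι ι (MvPolynomial σ R)).det =
      ∏ a, w a a := by
    classical
    rw [Matrix.det_apply, coeff_sum, sum_eq_single 1]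
    · have h1 : ∏ a, (if V a a then X (x a a) else C (k a a)) =
          (monomial (permExponent V x 1) (∏ a, w a a) : MvPolynomial σ R) := hterm 1
      simp [h1, coeff_monomial]
    · intro τ _ hτ
      obtain ⟨b, hb⟩ : ∃ b, τ b ≠ b := by
        by_contra! h
        exact hτ (Perm.ext h)
      simp only [Matrix.of_apply, hterm, Units.smul_def, coeff_smul, coeff_monomial]
      split_ifs with h
      · obtain ⟨h1, h2, h3⟩ := not_V_of_permExponent_eq hx h hb
        rw [prod_eq_zero (mem_univ b) (by simp [w, h1, hoff _ _ hb h3 h2 h1]), smul_zero]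
      · exact smul_zero _
    · simp
  intro hdet
  rw [hdet, coeff_zero] at hcoeff
  refine prod_ne_zero_iff.2 (fun a _ => ?_) hcoeff.symm
  by_cases ha : V a a <;> simp [w, ha, hdiag]

end TransversalDet

def identityTiling (v : ℤ × ℤ) : ℚ :=
  if (v.1 + v.2) % 2 = 1 then 0 else if (v.2 - v.1) % 4 = 0 then -1 else 1

lemma identityTiling_eq_zero {v : ℤ × ℤ} (h : (v.1 + v.2) % 2 = 1) : identityTiling v = 0 :=
  if_pos h

lemma identityTiling_ne_zero {v : ℤ × ℤ} (h : (v.1 + v.2) % 2 = 0) : identityTiling v ≠ 0 := by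
  unfold identityTiling
  rw [if_neg (by omega)]
  split_ifs <;> norm_num

lemma MexK_eq_algebraMap (v : ℤ × ℤ) :
    MexK v = algebraMap (MvPolynomial (ℤ × ℤ) ℚ) K
      (if (3 * v.1 + v.2) % 10 = 9 then X v else C (identityTiling v)) := by
  unfold MexK identityTiling
  split_ifs <;> simp

/-- In coordinates `(r, s)` relative to the corner of a block with `3 i₀ + j₀ ≡ c (mod 10)`,
cell `(r, s)` is a lattice cell iff `c + 3 r + s ≡ 9 (mod 10)`, and otherwise its entry is nonzero
iff `c + r + s` is even. -/
def IsTransversal (c n : ℕ) (T : Finset (ℕ × ℕ)) : Prop :=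
  (∀ x ∈ T, x.1 < n ∧ x.2 < n) ∧
  (∀ x ∈ T, ∀ y ∈ T, x.1 = y.1 ∨ x.2 = y.2 → x = y) ∧
  (∀ x ∈ T, (c + 3 * x.1 + x.2) % 10 ≠ 9 → (c + x.1 + x.2) % 2 = 0) ∧
  (∀ x ∈ T, ∀ y ∈ T, x ≠ y → (c + 3 * x.1 + x.2) % 10 ≠ 9 → (c + 3 * y.1 + y.2) % 10 ≠ 9 →
    (c + x.1 + y.2) % 2 = 1)

instance (c n : ℕ) : DecidablePred (IsTransversal c n) := fun _ => by
  unfold IsTransversal; infer_instance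

-- Row `r` meets the lattice in the columns `s ≡ 9 - c - 3 r (mod 10)`, taken here in `[b, b + 10)`.
def latticeBlock (c b : ℕ) : Finset (ℕ × ℕ) :=
  (Ico b (b + 10)).image fun r => (r, b + (9 * (c + b + 1) + 7 * r) % 10)

lemma mem_latticeBlock {c b : ℕ} {x : ℕ × ℕ} : x ∈ latticeBlock c b ↔
    b ≤ x.1 ∧ x.1 < b + 10 ∧ x.2 = b + (9 * (c + b + 1) + 7 * x.1) % 10 := by
  constructor
  · intro h
    obtain ⟨r, hr, rfl⟩ := mem_image.1 h
    simpa using mem_Ico.1 hr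
  · rintro ⟨h1, h2, h3⟩
    exact mem_image.2 ⟨x.1, mem_Ico.2 ⟨h1, h2⟩, Prod.ext rfl h3.symm⟩

lemma card_latticeBlock (c b : ℕ) : (latticeBlock c b).card = 10 := by
  rw [latticeBlock, card_image_of_injective _ fun r r' h => congrArg Prod.fst h]
  simp

lemma IsTransversal.union_latticeBlock {c b : ℕ} {T : Finset (ℕ × ℕ)} (hT : IsTransversal c b T) :
    IsTransversal c (b + 10) (T ∪ latticeBlock c b) := by
  obtain ⟨hbound, hinj, hdiag, hoff⟩ := hT
  have hlat : ∀ x ∈ latticeBlock c b, (c + 3 * x.1 + x.2) % 10 = 9 := fun x hx => by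
    rw [mem_latticeBlock] at hx; omega
  refine ⟨fun x hx => ?_, fun x hx y hy hxy => ?_, fun x hx hx9 => ?_,
    fun x hx y hy hne hx9 hy9 => ?_⟩
  · rcases mem_union.1 hx with hx | hx
    · have := hbound x hx; omega
    · rw [mem_latticeBlock] at hx; omega
  · rcases mem_union.1 hx with hx | hx <;> rcases mem_union.1 hy with hy | hy
    · exact hinj x hx y hy hxy
    · have := hbound x hx; rw [mem_latticeBlock] at hy; omega
    · have := hbound y hy; rw [mem_latticeBlock] at hx; omega
    · rw [mem_latticeBlock] at hx hy; exact Prod.ext (by omega) (by omega)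
  · rcases mem_union.1 hx with hx | hx
    · exact hdiag x hx hx9
    · exact absurd (hlat x hx) hx9
  · rcases mem_union.1 hx with hx | hx
    · rcases mem_union.1 hy with hy | hy
      · exact hoff x hx y hy hne hx9 hy9
      · exact absurd (hlat y hy) hy9
    · exact absurd (hlat x hx) hx9

lemma IsTransversal.card_union_latticeBlock {c b : ℕ} {T : Finset (ℕ × ℕ)}
    (hT : IsTransversal c b T) : (T ∪ latticeBlock c b).card = T.card + 10 := by
  rw [card_union_of_disjoint, card_latticeBlock]
  refine disjoint_left.2 fun x hx hx' => ?_
  have := (hT.1 x hx).1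
  rw [mem_latticeBlock] at hx'
  omega

/-- The constant cells added to the lattice cells of a `t × t` corner, `t < 10`, in the cases
where these fall more than two short of `t`. -/
def extraCells : ℕ → ℕ → Finset (ℕ × ℕ)
  | 0, 3 => {(0, 0)}
  | 1, 4 => {(0, 1)}
  | 2, 4 => {(0, 0)}
  | 4, 4 => {(0, 0)}
  | 5, 4 => {(0, 3)}
  | 0, 5 => {(0, 2)}
  | 1, 5 => {(0, 1), (1, 0)}
  | 2, 5 => {(0, 0)}
  | 4, 5 => {(0, 0)}
  | 8, 5 => {(1, 3)}
  | 0, 6 => {(0, 2)}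
  | 1, 6 => {(0, 1)}
  | 7, 6 => {(1, 4)}
  | 8, 6 => {(1, 3)}
  | 2, 7 => {(0, 0)}
  | _, _ => ∅

def smallTransversal (c t : ℕ) : Finset (ℕ × ℕ) :=
  (latticeBlock c 0).filter (fun x => x.1 < t ∧ x.2 < t) ∪ extraCells c t

theorem isTransversal_smallTransversal :
    ∀ c < 10, ∀ t < 10, IsTransversal c t (smallTransversal c t) ∧
      t ≤ (smallTransversal c t).card + 2 := by
  decide

theorem exists_isTransversal {c : ℕ} (hc : c < 10) (n : ℕ) :
    ∃ T, IsTransversal c n T ∧ n ≤ T.card + 2 := by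
  induction n using Nat.strong_induction_on with
  | _ n ih =>
    by_cases hn : n < 10
    · exact ⟨_, isTransversal_smallTransversal c hc n hn⟩
    obtain ⟨T, hT, hcard⟩ := ih (n - 10) (by omega)
    refine ⟨T ∪ latticeBlock c (n - 10), ?_, ?_⟩
    · simpa [show n - 10 + 10 = n by omega] using hT.union_latticeBlock
    · rw [hT.card_union_latticeBlock]; omega

theorem card_le_rank_of_isTransversal {i₀ j₀ : ℤ} {c n p q : ℕ} (hc : (3 * i₀ + j₀) % 10 = c)
    (hnp : n ≤ p) (hnq : n ≤ q) {T : Finset (ℕ × ℕ)} (hT : IsTransversal c n T) :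
    T.card ≤ (Matrix.of fun (r : Fin p) (s : Fin q) =>
      MexK (i₀ + ((r : ℕ) : ℤ), j₀ + ((s : ℕ) : ℤ))).rank := by
  obtain ⟨hbound, hinj, hdiag, hoff⟩ := hT
  set A := Matrix.of fun (r : Fin p) (s : Fin q) => MexK (i₀ + ((r : ℕ) : ℤ), j₀ + ((s : ℕ) : ℤ))
  let f : T → Fin p := fun a => ⟨a.1.1, (hbound a a.2).1.trans_le hnp⟩
  let g : T → Fin q := fun a => ⟨a.1.2, (hbound a a.2).2.trans_le hnq⟩
  let cell : T → T → ℤ × ℤ := fun a b => (i₀ + a.1.1, j₀ + b.1.2)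
  have hcell : Function.Injective (Function.uncurry cell) := by
    rintro ⟨a, b⟩ ⟨a', b'⟩ h
    simp only [Function.uncurry_apply_pair, cell, Prod.mk.injEq, add_right_inj, Nat.cast_inj] at h
    exact Prod.ext (Subtype.ext (hinj _ a.2 _ a'.2 (Or.inl h.1)))
      (Subtype.ext (hinj _ b.2 _ b'.2 (Or.inr h.2)))
  have hdet : (A.submatrix f g).det ≠ 0 := by
    have hsub : A.submatrix f g = (algebraMap (MvPolynomial (ℤ × ℤ) ℚ) K).mapMatrix
        (Matrix.of fun a b => if (3 * (cell a b).1 + (cell a b).2) % 10 = 9 then X (cell a b)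
          else C (identityTiling (cell a b))) := by
      ext a b
      simp [A, f, g, cell, MexK_eq_algebraMap]
    rw [hsub, ← RingHom.map_det]
    refine (map_ne_zero_iff _ (IsFractionRing.injective _ K)).2
      (det_ite_X_C_ne_zero hcell _ (fun a ha => ?_) (fun a b hab ha hb _ => ?_))
    · simp only [cell] at ha ⊢
      exact identityTiling_ne_zero (by have := hdiag a a.2 (by omega); omega)
    · simp only [cell] at ha hb ⊢
      exact identityTiling_eq_zero
        (by have := hoff a a.2 b b.2 (Subtype.coe_ne_coe.2 hab) (by omega) (by omega); omega)
  calc T.card = (A.submatrix f g).rank := by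
        rw [Matrix.rank_of_det_ne_zero hdet, Fintype.card_coe]
    _ ≤ A.rank := Matrix.rank_submatrix_le _ _ _

theorem MexK_block_rank_deficiency_le_two_general (i₀ j₀ : ℤ) (p q : ℕ) :
    min p q - 2 ≤
      (Matrix.of fun (r : Fin p) (s : Fin q) =>
        MexK (i₀ + ((r : ℕ) : ℤ), j₀ + ((s : ℕ) : ℤ))).rank := by
  obtain ⟨c, hc⟩ : ∃ c : ℕ, (3 * i₀ + j₀) % 10 = c := ⟨((3 * i₀ + j₀) % 10).toNat, by omega⟩
  obtain ⟨T, hT, hcard⟩ := exists_isTransversal (c := c) (by omega) (min p q)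
  have := card_le_rank_of_isTransversal hc (min_le_left p q) (min_le_right p q) hT
  omega

theorem MexK_block_rank_deficiency_le_two (i₀ j₀ : ℤ) (p q : ℕ) (hp : 0 < p) (hq : 0 < q) :
    min p q - 2 ≤
      (Matrix.of fun (r : Fin p) (s : Fin q) =>
        MexK (i₀ + ((r : ℕ) : ℤ), j₀ + ((s : ℕ) : ℤ))).rank :=
  MexK_block_rank_deficiency_le_two_general i₀ j₀ p q
end

section
/- Let p, q, r, s be integers greater than 1 with ps − qr = 1; set N = pqrs, α = qr − 1, β = ps − 1. Define M : ℤ × ℤ → ℤ/Nℤ to be 4-periodic in both indices with fundamental 4×4 block (rows listed top to bottom, entries taken mod N): (p, q, −p, −q), (r, s, −r, −s), (αp, βq, p, q), (βr, αs, r, s); that is, M(i,j) is the block entry in row i mod 4 and column j mod 4. Then M is an SL2-tiling over ℤ/Nℤ: for all i, j ∈ ℤ, M(i,j)·M(i+1,j+1) − M(i,j+1)·M(i+1,j) = 1 in ℤ/Nℤ. -/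
/-- The fundamental 4×4 block with rows
`(p, q, -p, -q)`, `(r, s, -r, -s)`, `(αp, βq, p, q)`, `(βr, αs, r, s)`,
where `α = qr - 1` and `β = ps - 1`. -/
def blockM (p q r s : ℤ) : Fin 4 → Fin 4 → ℤ :=
  ![![p, q, -p, -q],
    ![r, s, -r, -s],
    ![(q * r - 1) * p, (p * s - 1) * q, p, q],
    ![(p * s - 1) * r, (q * r - 1) * s, r, s]]

/-- The doubly 4-periodic tiling over `ZMod N` with fundamental block `blockM p q r s`. -/
def Mpqrs (p q r s : ℤ) (N : ℕ) : ℤ × ℤ → ZMod N := fun ij =>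
  ((blockM p q r s (Fin.ofNat 4 (ij.1 % 4).toNat) (Fin.ofNat 4 (ij.2 % 4).toNat) : ℤ) : ZMod N)


/-!
Modulo `ps - qr = 1`, each of the sixteen cyclically adjacent 2×2 minors of the block is an
integer of the form `1 + k·pqrs`, so it equals `1` in `ℤ/Nℤ`. Shifting an index by one moves
the corresponding index of the block cyclically, so every 2×2 minor of the tiling is one of these.
-/

theorem Fin.ofNat_toNat_add_one_emod (n : ℕ) [NeZero n] (k : ℤ) :
    Fin.ofNat n ((k + 1) % n).toNat = Fin.ofNat n (k % n).toNat + 1 := by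
  have hn : (n : ℤ) ≠ 0 := by exact_mod_cast NeZero.ne n
  ext
  simp only [Fin.val_add, Fin.val_ofNat, Fin.val_one']
  zify [Int.emod_nonneg k hn, Int.emod_nonneg (k + 1) hn]
  rw [Int.toNat_of_nonneg (Int.emod_nonneg _ hn), Int.toNat_of_nonneg (Int.emod_nonneg _ hn)]
  simp [Int.add_emod]

theorem blockM_cyclic_minor {R : Type*} [CommRing R] {p q r s : ℤ} (hdet : p * s - q * r = 1)
    (hpqrs : ((p * q * r * s : ℤ) : R) = 0) (a b : Fin 4) :
    (blockM p q r s a b : R) * blockM p q r s (a + 1) (b + 1) -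
      (blockM p q r s a (b + 1) : R) * blockM p q r s (a + 1) b = 1 := by
  have hdet' : (p : R) * s - q * r = 1 := by exact_mod_cast congrArg (Int.cast : ℤ → R) hdet
  push_cast at hpqrs
  fin_cases a <;> fin_cases b <;>
    simp only [blockM, Fin.isValue, Fin.zero_eta, Fin.mk_one, Fin.reduceFinMk, Fin.reduceAdd,
      Matrix.cons_val', Matrix.cons_val, Matrix.cons_val_zero, Matrix.cons_val_one,
      Matrix.cons_val_fin_one, Int.cast_neg, Int.cast_mul, Int.cast_sub, Int.cast_one] <;>
    first
      | linear_combination hdet'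
      | linear_combination hdet' + hpqrs
      | linear_combination hdet' - hpqrs
      | linear_combination (1 - p * q * r * s : R) * hdet' - hpqrs

theorem Mpqrs_isSL2Tiling_general (p q r s : ℤ)
    (hdet : p * s - q * r = 1) (N : ℕ) (hN : (N : ℤ) = p * q * r * s) :
    IsSL2Tiling (Mpqrs p q r s N) := by
  have hpqrs : ((p * q * r * s : ℤ) : ZMod N) = 0 := by
    rw [← hN, Int.cast_natCast, ZMod.natCast_self]
  have shift (k : ℤ) : Fin.ofNat 4 ((k + 1) % 4).toNat = Fin.ofNat 4 (k % 4).toNat + 1 := by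
    exact_mod_cast Fin.ofNat_toNat_add_one_emod 4 k
  intro i j
  simpa only [Mpqrs, shift] using
    blockM_cyclic_minor hdet hpqrs (Fin.ofNat 4 (i % 4).toNat) (Fin.ofNat 4 (j % 4).toNat)

theorem Mpqrs_isSL2Tiling (p q r s : ℤ) (hp : 1 < p) (hq : 1 < q) (hr : 1 < r) (hs : 1 < s)
    (hdet : p * s - q * r = 1) (N : ℕ) (hN : (N : ℤ) = p * q * r * s) :
    IsSL2Tiling (Mpqrs p q r s N) :=
  Mpqrs_isSL2Tiling_general p q r s hdet N hN
end
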